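/- arXiv:1004.2372 — 2 statements merged into one kernel-verified Lean document; each statement's English description precedes it below -/
import Mathlib

section
/- Let M be an algorithm that learns the class of deterministic (2n+3)-OREs in the limit from positive data, let A = {a₁,…,aₙ} with n ≥ 3 distinct letters, and let r₁ = (a₁a₂ + a₃ + ⋯ + aₙ)⁺. Then every characteristic sample S for r₁ must contain all non-empty words of length at most n over B = A ∖ {a₁,a₂}; hence |S| ≥ Σ_{i=1}^{n} (n−2)^i. -/
open Computability

/-- Regular expressions (with explicit parentheses) built from ∅, ε, letters,
concatenation, union, optional `?` and one-or-more `⁺`. -/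
inductive PRE (α : Type) where
  | empty : PRE α
  | eps : PRE α
  | char : α → PRE α
  | paren : PRE α → PRE α
  | cat : PRE α → PRE α → PRE α
  | alt : PRE α → PRE α → PRE α
  | opt : PRE α → PRE α
  | pos : PRE α → PRE α

/-- The language of a regular expression. -/
def PRE.lang {α : Type} : PRE α → Language α
  | .empty => 0
  | .eps => 1
  | .char a => {[a]}
  | .paren r => r.lang
  | .cat r s => r.lang * s.lang
  | .alt r s => r.lang + s.lang
  | .opt r => r.lang + 1
  | .pos r => r.lang * (r.lang)∗

/-- Replace the i-th occurrence of each letter `a` by the marked symbol `(a, i)`,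
threading occurrence counters. -/
def PRE.markAux {α : Type} [DecidableEq α] : PRE α → (α → ℕ) → PRE (α × ℕ) × (α → ℕ)
  | .empty, c => (.empty, c)
  | .eps, c => (.eps, c)
  | .char a, c => (.char (a, c a + 1), fun b => if b = a then c a + 1 else c b)
  | .paren r, c => let p := r.markAux c; (.paren p.1, p.2)
  | .cat r s, c => let p := r.markAux c; let q := s.markAux p.2; (.cat p.1 q.1, q.2)
  | .alt r s, c => let p := r.markAux c; let q := s.markAux p.2; (.alt p.1 q.1, q.2)
  | .opt r, c => let p := r.markAux c; (.opt p.1, p.2)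
  | .pos r, c => let p := r.markAux c; (.pos p.1, p.2)

/-- The marked version r̄ of a regular expression. -/
def PRE.mark {α : Type} [DecidableEq α] (r : PRE α) : PRE (α × ℕ) :=
  (r.markAux fun _ => 0).1

/-- A regular expression is deterministic (one-unambiguous) if its marked version
admits no two words w·a⁽ⁱ⁾·v and w·a⁽ʲ⁾·v′ with i ≠ j. -/
def PRE.Deterministic {α : Type} [DecidableEq α] (r : PRE α) : Prop :=
  ∀ (w v v' : List (α × ℕ)) (a : α) (i j : ℕ),
    w ++ (a, i) :: v ∈ r.mark.lang → w ++ (a, j) :: v' ∈ r.mark.lang → i = j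

/-- Number of occurrences of the letter `a` in `r`. -/
def PRE.rep {α : Type} [DecidableEq α] : PRE α → α → ℕ
  | .empty, _ => 0
  | .eps, _ => 0
  | .char b, a => if b = a then 1 else 0
  | .paren r, a => r.rep a
  | .cat r s, a => r.rep a + s.rep a
  | .alt r s, a => r.rep a + s.rep a
  | .opt r, a => r.rep a
  | .pos r, a => r.rep a

/-- `r` is a k-occurrence regular expression: every letter occurs at most `k` times. -/
def PRE.IsKORE {α : Type} [DecidableEq α] (k : ℕ) (r : PRE α) : Prop :=
  ∀ a, r.rep a ≤ k

/-- Length of the string representation (letters, ∅, ε, operators ·, +, ?, ⁺ and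
parentheses each count as one character). -/
def PRE.len {α : Type} : PRE α → ℕ
  | .empty => 1
  | .eps => 1
  | .char _ => 1
  | .paren r => r.len + 2
  | .cat r s => r.len + s.len + 1
  | .alt r s => r.len + s.len + 1
  | .opt r => r.len + 1
  | .pos r => r.len + 1

/-- `M` learns the class `R` in the limit from positive data: it is sound
(`S ⊆ L(M S)` for every sample `S`) and complete (every `r ∈ R` has a
characteristic sample `S_r ⊆ L(r)` such that `M S` is equivalent to `r`
whenever `S_r ⊆ S ⊆ L(r)`). -/
def Learns {α : Type} (M : Finset (List α) → PRE α) (R : Set (PRE α)) : Prop :=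
  (∀ S : Finset (List α), ∀ w ∈ S, w ∈ (M S).lang) ∧
  ∀ r ∈ R, ∃ Sr : Finset (List α), (∀ w ∈ Sr, w ∈ r.lang) ∧
    ∀ S : Finset (List α), Sr ⊆ S → (∀ w ∈ S, w ∈ r.lang) → (M S).lang = r.lang

/-- Disjunction of the letters in a list. -/
def bigAlt {n : ℕ} : List (Fin n) → PRE (Fin n)
  | [] => .empty
  | [x] => .char x
  | x :: y :: xs => .alt (.char x) (bigAlt (y :: xs))

/-- The list of letters of B = A ∖ {a₁, a₂} (letters a₃, …, aₙ). -/
def Blist (n : ℕ) : List (Fin n) := (List.finRange n).drop 2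

/-- The expression a₁a₂ + a₃ + ⋯ + aₙ. -/
def coreRE (n : ℕ) (h : 2 ≤ n) : PRE (Fin n) :=
  .alt (.cat (.char ⟨0, by omega⟩) (.char ⟨1, by omega⟩)) (bigAlt (Blist n))

/-- The expression r₁ = (a₁a₂ + a₃ + ⋯ + aₙ)⁺. -/
def r1 (n : ℕ) (h : 2 ≤ n) : PRE (Fin n) := .pos (coreRE n h)

/-- r_wⁱ = (a₁a₂ + (B ∖ {b}))·(a₁a₂ + a₃ + ⋯ + aₙ)*, accepting all words of L(r₁)
that do not start with b.  (Here s* abbreviates (s⁺)?.) -/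
def rwi (n : ℕ) (h : 2 ≤ n) (b : Fin n) : PRE (Fin n) :=
  .cat (.alt (.cat (.char ⟨0, by omega⟩) (.char ⟨1, by omega⟩))
          (bigAlt ((Blist n).filter (· ≠ b))))
    (.opt (.pos (coreRE n h)))

/-- The nested tail Y of the expression r_w:
Y(b_i ⋯ b_m) = ε + r_wⁱ + bᵢ·Y(b_{i+1} ⋯ b_m), with Y(ε) = r₁. -/
def rexclTail (n : ℕ) (h : 2 ≤ n) : List (Fin n) → PRE (Fin n)
  | [] => r1 n h
  | b :: rest => .alt .eps (.alt (rwi n h b) (.cat (.char b) (rexclTail n h rest)))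

/-- The expression r_w = r_w¹ + b₁(ε + r_w² + b₂(⋯ + b_m·r₁ ⋯)) for w = b₁ ⋯ b_m. -/
def rexcl (n : ℕ) (h : 2 ≤ n) : List (Fin n) → PRE (Fin n)
  | [] => .empty
  | b :: rest => .alt (rwi n h b) (.cat (.char b) (rexclTail n h rest))

/-!
For a nonempty word `w = b₁ ⋯ b_m` over `B` the expression `rexcl w` is a deterministic
`(2m+1)`-ORE with `L(rexcl w) = L(r₁) ∖ {w}`. If `w` were missing from a characteristic sample `S`
of `r₁`, then `S` together with a characteristic sample of `rexcl w` would lie in both languages,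
and the learner would have to output an expression equivalent to both. Counting the words over
`B` of length at most `n` gives the bound on `|S|`.

The language identity rests on splitting `L(r₁) = L(r_wⁱ) + bᵢ·(a₁a₂ + B)*`, where no word of
`r_wⁱ` starts with `bᵢ`. Determinism is checked compositionally on marked expressions: a union is
deterministic when its sides cannot start with the same letter, a concatenation when no letter
both extends a word of the first factor inside it and starts a word of the second, and every
expression in which each letter occurs at most once is deterministic.
-/

theorem List.exists_eq_append_of_append_eq_append_cons {α : Type*} {x₁ x₂ p v : List α} {s : α}
    (h : x₁ ++ x₂ = p ++ s :: v) :
    (∃ q, p = x₁ ++ q ∧ x₂ = q ++ s :: v) ∨ ∃ t, x₁ = p ++ s :: t := by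
  rcases List.append_eq_append_iff.mp h with h | ⟨_ | ⟨s', t⟩, rfl, h'⟩
  · exact Or.inl h
  · exact Or.inl ⟨[], by simpa using h'.symm⟩
  · obtain ⟨rfl, -⟩ := List.cons.inj h'
    exact Or.inr ⟨t, rfl⟩

namespace Language

variable {α : Type*}

def OneUnambiguous (L : Language (α × ℕ)) : Prop :=
  ∀ (w v v' : List (α × ℕ)) (a : α) (i j : ℕ),
    w ++ (a, i) :: v ∈ L → w ++ (a, j) :: v' ∈ L → i = j

variable {L L₁ L₂ : Language (α × ℕ)}

theorem oneUnambiguous_of_forall_index_eq (f : α → ℕ)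
    (h : ∀ w ∈ L, ∀ a i, (a, i) ∈ w → i = f a) : L.OneUnambiguous := by
  intro w v v' a i j hv hv'
  rw [h _ hv a i (by simp), h _ hv' a j (by simp)]

theorem OneUnambiguous.add (h₁ : L₁.OneUnambiguous) (h₂ : L₂.OneUnambiguous)
    (h : ∀ a i j u v, (a, i) :: u ∈ L₁ → (a, j) :: v ∈ L₂ → False) :
    (L₁ + L₂).OneUnambiguous := by
  have cross : ∀ w v v' a i j, w ++ (a, i) :: v ∈ L₁ → w ++ (a, j) :: v' ∈ L₂ → False := by
    rintro (_ | ⟨⟨b, k⟩, w⟩) v v' a i j hv hv'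
    exacts [h a i j v v' hv hv', h b k k _ _ hv hv']
  rintro w v v' a i j (hv | hv) (hv' | hv')
  exacts [h₁ w v v' a i j hv hv', (cross w v v' a i j hv hv').elim,
    (cross w v' v a j i hv' hv).elim, h₂ w v v' a i j hv hv']

theorem OneUnambiguous.mul (h₁ : L₁.OneUnambiguous) (h₂ : L₂.OneUnambiguous)
    (h : ∀ u v t a i j, u ∈ L₁ → u ++ (a, i) :: v ∈ L₁ → (a, j) :: t ∈ L₂ → False) :
    (L₁ * L₂).OneUnambiguous := by
  -- the case where the first factor of `x₁ ++ x₂` ends before the position of `(a, i)`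
  have of_split_before : ∀ {x₁ q v v' a i j}, x₁ ∈ L₁ → q ++ (a, i) :: v ∈ L₂ →
      x₁ ++ q ++ (a, j) :: v' ∈ L₁ * L₂ → i = j := by
    intro x₁ q v v' a i j hx₁ hx₂ hy
    obtain ⟨y₁, hy₁, y₂, hy₂, hy⟩ := mem_mul.mp hy
    rw [List.append_assoc, List.append_eq_append_iff] at hy
    rcases hy with ⟨_ | ⟨⟨b, k⟩, c⟩, rfl, rfl⟩ | ⟨_ | ⟨⟨b, k⟩, c⟩, rfl, hc⟩
    · exact h₂ q v v' a i j hx₂ (by simpa using hy₂)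
    · exact (h y₁ c _ b k k hy₁ hx₁ hy₂).elim
    · exact h₂ q v v' a i j hx₂ (by simpa using hc ▸ hy₂)
    · rcases q with _ | ⟨⟨b', k'⟩, q⟩
      · obtain ⟨⟨rfl, rfl⟩, rfl⟩ : ((a, j) = (b, k)) ∧ v' = c ++ y₂ := by simpa using hc
        exact (h x₁ c v a j i hx₁ hy₁ hx₂).elim
      · obtain ⟨⟨rfl, rfl⟩, -⟩ : ((b', k') = (b, k)) ∧ _ := List.cons.inj hc
        exact (h x₁ c _ b k k hx₁ hy₁ hx₂).elim
  intro p v v' a i j hx hy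
  obtain ⟨x₁, hx₁, x₂, hx₂, hxe⟩ := mem_mul.mp hx
  obtain ⟨y₁, hy₁, y₂, hy₂, hye⟩ := mem_mul.mp hy
  rcases List.exists_eq_append_of_append_eq_append_cons hxe with ⟨q, rfl, rfl⟩ | ⟨t, rfl⟩
  · exact of_split_before hx₁ hx₂ hy
  rcases List.exists_eq_append_of_append_eq_append_cons hye with ⟨q, rfl, rfl⟩ | ⟨t', rfl⟩
  · exact (of_split_before hy₁ hy₂ hx).symm
  · exact h₁ p t t' a i j hx₁ hy₁

section

variable {R K : Language α} {b : α} {u w : List α}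

theorem mem_singleton_mul {X : Language α} :
    w ∈ ({[b]} : Language α) * X ↔ ∃ t ∈ X, w = b :: t := by
  simp only [mem_mul]
  constructor
  · rintro ⟨_, rfl, t, ht, rfl⟩
    exact ⟨t, ht, rfl⟩
  · rintro ⟨t, ht, rfl⟩
    exact ⟨[b], rfl, t, ht, rfl⟩

theorem add_singleton_mul_sub_singleton (hR : ∀ t, b :: t ∉ R) :
    R + {[b]} * (K - {u}) = R + {[b]} * K - {b :: u} := by
  ext w
  simp only [mem_add, mem_sub, mem_singleton_mul]
  constructor
  · rintro (hw | ⟨t, ⟨ht, htu⟩, rfl⟩)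
    · exact ⟨Or.inl hw, by rintro rfl; exact hR u hw⟩
    · exact ⟨Or.inr ⟨t, ht, rfl⟩, fun h => htu (List.cons.inj h).2⟩
  · rintro ⟨hw | ⟨t, ht, rfl⟩, hwu⟩
    · exact Or.inl hw
    · exact Or.inr ⟨t, ⟨ht, fun h => hwu (congrArg _ h)⟩, rfl⟩

end

end Language

namespace PRE

variable {α : Type} [DecidableEq α]

theorem markAux_snd_apply (r : PRE α) (c : α → ℕ) (a : α) :
    (r.markAux c).2 a = c a + r.rep a := by
  induction r generalizing c with
  | empty | eps => simp [markAux, rep]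
  | char b =>
    simp only [markAux, rep]
    split_ifs <;> simp_all
  | paren r ih | opt r ih | pos r ih => simp [markAux, rep, ih]
  | cat r s ihr ihs | alt r s ihr ihs =>
    simp only [markAux, rep, ihr, ihs]
    omega

theorem map_fst_markAux_lang (r : PRE α) (c : α → ℕ) :
    Language.map Prod.fst (r.markAux c).1.lang = r.lang := by
  induction r generalizing c with
  | empty => exact map_zero _
  | eps => exact map_one _
  | char b => exact Set.image_singleton
  | paren r ih => exact ih c
  | opt r ih => simp only [markAux, lang, map_add, map_one, ih]
  | pos r ih => simp only [markAux, lang, map_mul, Language.map_kstar, ih]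
  | cat r s ihr ihs => simp only [markAux, lang, map_mul, ihr, ihs]
  | alt r s ihr ihs => simp only [markAux, lang, map_add, ihr, ihs]

theorem lt_and_le_of_mem_markAux_lang {r : PRE α} {c : α → ℕ} {w : List (α × ℕ)}
    (hw : w ∈ (r.markAux c).1.lang) {a : α} {i : ℕ} (hai : (a, i) ∈ w) :
    c a < i ∧ i ≤ c a + r.rep a := by
  induction r generalizing c w with
  | empty => exact absurd hw (Language.notMem_zero w)
  | eps =>
    rw [show w = [] from hw] at hai
    exact absurd hai List.not_mem_nil
  | char b =>
    obtain rfl : w = [(b, c b + 1)] := hw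
    obtain ⟨rfl, rfl⟩ := Prod.mk.inj (List.mem_singleton.mp hai)
    simp [rep]
  | paren r ih => exact ih hw hai
  | opt r ih =>
    rcases hw with hw | hw
    · exact ih hw hai
    · rw [show w = [] from hw] at hai
      exact absurd hai List.not_mem_nil
  | pos r ih =>
    obtain ⟨u, hu, v, hv, rfl⟩ := Language.mem_mul.mp hw
    obtain ⟨L, rfl, hL⟩ := Language.mem_kstar.mp hv
    rcases List.mem_append.mp hai with h | h
    · exact ih hu h
    · obtain ⟨x, hx, hax⟩ := List.mem_flatten.mp h
      exact ih (hL x hx) hax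
  | alt r s ihr ihs =>
    rcases hw with hw | hw
    · have := ihr hw hai
      simp only [rep]
      omega
    · have := markAux_snd_apply r c a ▸ ihs hw hai
      simp only [rep]
      omega
  | cat r s ihr ihs =>
    obtain ⟨u, hu, v, hv, rfl⟩ := Language.mem_mul.mp hw
    rcases List.mem_append.mp hai with h | h
    · have := ihr hu h
      simp only [rep]
      omega
    · have := markAux_snd_apply r c a ▸ ihs hv h
      simp only [rep]
      omega

theorem map_fst_mem_lang {r : PRE α} {c : α → ℕ} {w : List (α × ℕ)}
    (hw : w ∈ (r.markAux c).1.lang) : w.map Prod.fst ∈ r.lang :=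
  map_fst_markAux_lang r c ▸ Set.mem_image_of_mem _ hw

/-- Unlike `Deterministic`, this is compositional: subexpressions are marked with shifted
occurrence counters. -/
def MarkDeterministic (r : PRE α) : Prop :=
  ∀ c : α → ℕ, (r.markAux c).1.lang.OneUnambiguous

theorem MarkDeterministic.deterministic {r : PRE α} (h : r.MarkDeterministic) :
    r.Deterministic :=
  h _

theorem markDeterministic_of_rep_le_one {r : PRE α} (h : ∀ a, r.rep a ≤ 1) :
    r.MarkDeterministic := fun c =>
  Language.oneUnambiguous_of_forall_index_eq (fun a => c a + 1) fun _ hw a _ hai => by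
    have := lt_and_le_of_mem_markAux_lang hw hai
    have := h a
    omega

theorem MarkDeterministic.alt {r s : PRE α} (hr : r.MarkDeterministic)
    (hs : s.MarkDeterministic) (h : ∀ a u v, a :: u ∈ r.lang → a :: v ∈ s.lang → False) :
    (r.alt s).MarkDeterministic := fun c =>
  (hr c).add (hs _) fun a _ _ _ _ hu hv => h a _ _ (map_fst_mem_lang hu) (map_fst_mem_lang hv)

theorem MarkDeterministic.cat {r s : PRE α} (hr : r.MarkDeterministic)
    (hs : s.MarkDeterministic)
    (h : ∀ u v t a, u ∈ r.lang → u ++ a :: v ∈ r.lang → a :: t ∈ s.lang → False) :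
    (r.cat s).MarkDeterministic := fun c =>
  (hr c).mul (hs _) fun _ _ _ a _ _ hu huv ht =>
    h _ _ _ a (map_fst_mem_lang hu) (by simpa using map_fst_mem_lang huv) (map_fst_mem_lang ht)

end PRE

theorem sum_pow_card_le_card_of_map_mem {β α : Type*} [Fintype β] (e : β ↪ α) {n : ℕ}
    {S : Finset (List α)} (hS : ∀ w : List β, w ≠ [] → w.length ≤ n → w.map e ∈ S) :
    ∑ i ∈ Finset.Icc 1 n, Fintype.card β ^ i ≤ S.card := by
  calc ∑ i ∈ Finset.Icc 1 n, Fintype.card β ^ i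
      = ((Finset.Icc 1 n).sigma fun i => (Finset.univ : Finset (Fin i → β))).card := by
        simp [Finset.card_sigma]
    _ ≤ S.card := by
      refine Finset.card_le_card_of_injOn (fun p => (List.ofFn p.2).map e) ?_ ?_
      · rintro ⟨i, g⟩ hi
        simp only [Finset.coe_sigma, Set.mem_sigma_iff, Finset.coe_Icc, Set.mem_Icc] at hi
        exact hS _ (by simp; omega) (by simp; omega)
      · rintro ⟨i, f⟩ - ⟨j, g⟩ - hfg
        exact List.ofFn_inj'.mp (List.map_injective_iff.mpr e.injective hfg)

theorem Learns.mem_of_lang_eq_sub_singleton {α : Type} {M : Finset (List α) → PRE α}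
    {R : Set (PRE α)} (hM : Learns M R) {r r' : PRE α} {S : Finset (List α)}
    (hsub : ∀ w ∈ S, w ∈ r.lang)
    (hchar : ∀ S' : Finset (List α), S ⊆ S' → (∀ w ∈ S', w ∈ r.lang) → (M S').lang = r.lang)
    (hr' : r' ∈ R) {w : List α} (hw : w ∈ r.lang) (hr'w : r'.lang = r.lang - {w}) :
    w ∈ S := by
  classical
  by_contra hwS
  obtain ⟨Sr, hSr, hcharSr⟩ := hM.2 r' hr'
  rw [hr'w] at hSr hcharSr
  have hS : ∀ u ∈ S ∪ Sr, u ∈ r.lang - {w} := by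
    intro u hu
    rcases Finset.mem_union.mp hu with hu | hu
    · exact ⟨hsub u hu, by rintro rfl; exact hwS hu⟩
    · exact hSr u hu
  have hlang : r.lang = r.lang - {w} :=
    (hchar _ Finset.subset_union_left fun u hu => (hS u hu).1).symm.trans
      (hcharSr _ Finset.subset_union_right hS)
  exact (hlang ▸ hw : w ∈ r.lang - {w}).2 rfl

section Exclusion

variable {n : ℕ} (h : 2 ≤ n)

def blockRE (l : List (Fin n)) : PRE (Fin n) :=
  .alt (.cat (.char ⟨0, by omega⟩) (.char ⟨1, by omega⟩)) (bigAlt l)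

theorem mem_lang_bigAlt {l : List (Fin n)} {w : List (Fin n)} :
    w ∈ (bigAlt l).lang ↔ ∃ x ∈ l, w = [x] := by
  induction l using bigAlt.induct with
  | case1 => simp [bigAlt, PRE.lang]
  | case2 x => simp [bigAlt, PRE.lang]; rfl
  | case3 x y xs ih =>
    rw [bigAlt, PRE.lang, Language.mem_add, ih, List.exists_mem_cons_iff _ x]
    rfl

theorem rep_bigAlt (l : List (Fin n)) (a : Fin n) : (bigAlt l).rep a = l.count a := by
  induction l using bigAlt.induct with
  | case1 => rfl
  | case2 x => simp [bigAlt, PRE.rep, List.count_singleton]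
  | case3 x y xs ih =>
    rw [bigAlt, PRE.rep, ih]
    simp only [PRE.rep, List.count_cons, beq_iff_eq]
    omega

theorem mem_lang_blockRE {l : List (Fin n)} {w : List (Fin n)} :
    w ∈ (blockRE h l).lang ↔ w = [⟨0, by omega⟩, ⟨1, by omega⟩] ∨ ∃ x ∈ l, w = [x] := by
  rw [blockRE, PRE.lang, Language.mem_add, mem_lang_bigAlt, PRE.lang, Language.mem_mul]
  constructor
  · rintro (⟨_, rfl, _, rfl, rfl⟩ | hw)
    exacts [Or.inl rfl, Or.inr hw]
  · rintro (rfl | hw)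
    exacts [Or.inl ⟨_, rfl, _, rfl, rfl⟩, Or.inr hw]

theorem rep_blockRE (l : List (Fin n)) (a : Fin n) :
    (blockRE h l).rep a = (⟨0, by omega⟩ :: ⟨1, by omega⟩ :: l).count a := by
  simp only [blockRE, PRE.rep, rep_bigAlt, List.count_cons, beq_iff_eq]
  omega

theorem zero_cons_one_cons_Blist :
    (⟨0, by omega⟩ : Fin n) :: ⟨1, by omega⟩ :: Blist n = List.finRange n := by
  apply List.ext_getElem
  · simp [Blist]
    omega
  · rintro (_ | _ | k) _ _ <;> simp [Blist]
    omega

theorem mem_Blist {x : Fin n} : x ∈ Blist n ↔ 2 ≤ (x : ℕ) := by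
  rw [Blist, List.mem_drop_iff_getElem]
  simp only [List.length_finRange, List.getElem_finRange, Fin.ext_iff, Fin.val_cast]
  constructor
  · rintro ⟨i, -, hx⟩
    omega
  · intro hx
    exact ⟨x - 2, by omega, by omega⟩

theorem coreRE_eq_blockRE : coreRE n h = blockRE h (Blist n) := rfl

theorem rwi_eq_cat (b : Fin n) :
    rwi n h b = .cat (blockRE h ((Blist n).filter (· ≠ b))) (.opt (r1 n h)) := rfl

theorem rep_coreRE_le_one (a : Fin n) : (coreRE n h).rep a ≤ 1 := by
  rw [coreRE_eq_blockRE, rep_blockRE, zero_cons_one_cons_Blist h, List.count_finRange]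

theorem rep_blockRE_filter_le_one (b a : Fin n) :
    (blockRE h ((Blist n).filter (· ≠ b))).rep a ≤ 1 := by
  have hsub : List.Sublist (⟨0, by omega⟩ :: ⟨1, by omega⟩ :: (Blist n).filter (· ≠ b))
      (List.finRange n) := by
    rw [← zero_cons_one_cons_Blist h]
    exact (List.filter_sublist.cons_cons _).cons_cons _
  rw [rep_blockRE]
  exact (hsub.count_le a).trans_eq (List.count_finRange a)

theorem rep_rwi_add_le {b : Fin n} (hb : 2 ≤ (b : ℕ)) (a : Fin n) :
    (rwi n h b).rep a + (if b = a then 1 else 0) ≤ 2 := by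
  have hcore := rep_coreRE_le_one h a
  have hblock := rep_blockRE_filter_le_one h b a
  rw [rwi_eq_cat, PRE.rep, PRE.rep, r1, PRE.rep]
  split_ifs with hba
  · subst hba
    suffices (blockRE h ((Blist n).filter (· ≠ b))).rep b = 0 by omega
    simp [rep_blockRE, List.count_eq_zero, Fin.ext_iff]
    omega
  · omega

theorem lang_r1 : (r1 n h).lang = (coreRE n h).lang * (coreRE n h).lang∗ := rfl

theorem kstar_lang_coreRE : (coreRE n h).lang∗ = 1 + (r1 n h).lang :=
  (Language.one_add_self_mul_kstar_eq_kstar _).symm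

theorem nil_notMem_lang_r1 : [] ∉ (r1 n h).lang := by
  rw [lang_r1, Language.mem_mul]
  rintro ⟨u, hu, v, -, huv⟩
  rcases (mem_lang_blockRE h).mp hu with rfl | ⟨x, -, rfl⟩ <;> simp at huv

theorem lang_coreRE_eq_add {b : Fin n} (hb : 2 ≤ (b : ℕ)) :
    (coreRE n h).lang = (blockRE h ((Blist n).filter (· ≠ b))).lang + {[b]} := by
  ext w
  rw [Language.mem_add, coreRE_eq_blockRE, mem_lang_blockRE, mem_lang_blockRE]
  simp only [List.mem_filter, mem_Blist, ne_eq, decide_eq_true_eq]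
  constructor
  · rintro (hw | ⟨x, hx, rfl⟩)
    · exact Or.inl (Or.inl hw)
    · by_cases hxb : x = b
      · exact Or.inr (hxb ▸ rfl)
      · exact Or.inl (Or.inr ⟨x, ⟨hx, hxb⟩, rfl⟩)
  · rintro ((hw | ⟨x, ⟨hx, -⟩, rfl⟩) | rfl)
    exacts [Or.inl hw, Or.inr ⟨x, hx, rfl⟩, Or.inr ⟨b, hb, rfl⟩]

theorem lang_rwi (b : Fin n) :
    (rwi n h b).lang = (blockRE h ((Blist n).filter (· ≠ b))).lang * (coreRE n h).lang∗ := by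
  rw [kstar_lang_coreRE, add_comm]
  rfl

theorem lang_r1_eq_add {b : Fin n} (hb : 2 ≤ (b : ℕ)) :
    (r1 n h).lang = (rwi n h b).lang + {[b]} * (coreRE n h).lang∗ := by
  rw [lang_rwi, lang_r1, lang_coreRE_eq_add h hb, add_mul]

theorem cons_notMem_lang_rwi {b : Fin n} (hb : 2 ≤ (b : ℕ)) (t : List (Fin n)) :
    b :: t ∉ (rwi n h b).lang := by
  rw [lang_rwi, Language.mem_mul]
  rintro ⟨u, hu, v, -, huv⟩
  rcases (mem_lang_blockRE h).mp hu with rfl | ⟨x, hx, rfl⟩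
  · obtain ⟨rfl, -⟩ := List.cons.inj huv
    simp at hb
  · obtain ⟨rfl, -⟩ := List.cons.inj huv
    simp at hx

theorem lang_rexclTail {u : List (Fin n)} (hu : ∀ x ∈ u, 2 ≤ (x : ℕ)) :
    (rexclTail n h u).lang = (coreRE n h).lang∗ - {u} := by
  induction u with
  | nil =>
    ext w
    rw [kstar_lang_coreRE, rexclTail, Language.mem_sub, Language.mem_add, Language.mem_one]
    constructor
    · intro hw
      exact ⟨Or.inr hw, by rintro rfl; exact nil_notMem_lang_r1 h hw⟩
    · rintro ⟨rfl | hw, hne⟩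
      exacts [(hne rfl).elim, hw]
  | cons b rest ih =>
    have hb := hu b List.mem_cons_self
    simp only [rexclTail, PRE.lang]
    rw [ih fun x hx => hu x (List.mem_cons_of_mem b hx),
      Language.add_singleton_mul_sub_singleton (cons_notMem_lang_rwi h hb),
      ← lang_r1_eq_add h hb, kstar_lang_coreRE]
    ext w
    simp only [Language.mem_add, Language.mem_sub, Language.mem_one]
    constructor
    · rintro (rfl | ⟨hw, hne⟩)
      exacts [⟨Or.inl rfl, List.cons_ne_nil b rest ∘ Eq.symm⟩, ⟨Or.inr hw, hne⟩]
    · rintro ⟨rfl | hw, hne⟩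
      exacts [Or.inl rfl, Or.inr ⟨hw, hne⟩]

theorem lang_rexcl {u : List (Fin n)} (hu : ∀ x ∈ u, 2 ≤ (x : ℕ)) (hne : u ≠ []) :
    (rexcl n h u).lang = (r1 n h).lang - {u} := by
  obtain ⟨b, rest, rfl⟩ := List.exists_cons_of_ne_nil hne
  have hb := hu b List.mem_cons_self
  simp only [rexcl, PRE.lang]
  rw [lang_rexclTail h fun x hx => hu x (List.mem_cons_of_mem b hx),
    Language.add_singleton_mul_sub_singleton (cons_notMem_lang_rwi h hb), ← lang_r1_eq_add h hb]

theorem mem_lang_r1 {w : List (Fin n)} (hw : w ≠ []) (hB : ∀ x ∈ w, 2 ≤ (x : ℕ)) :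
    w ∈ (r1 n h).lang := by
  obtain ⟨b, t, rfl⟩ := List.exists_cons_of_ne_nil hw
  have ht : t ∈ (coreRE n h).lang∗ := by
    have hsingle : ∀ y ∈ t.map ([·]), y ∈ (coreRE n h).lang := by
      simp only [List.mem_map]
      rintro _ ⟨x, hx, rfl⟩
      rw [coreRE_eq_blockRE, mem_lang_blockRE]
      exact Or.inr ⟨x, mem_Blist.mpr (hB x (List.mem_cons_of_mem b hx)), rfl⟩
    exact Language.mem_kstar.mpr ⟨_, by rw [← List.flatMap_def]; simp, hsingle⟩
  rw [lang_r1]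
  refine Language.append_mem_mul (a := [b]) ?_ ht
  rw [coreRE_eq_blockRE, mem_lang_blockRE]
  exact Or.inr ⟨b, mem_Blist.mpr (hB b List.mem_cons_self), rfl⟩

theorem markDeterministic_rwi (b : Fin n) : (rwi n h b).MarkDeterministic := by
  rw [rwi_eq_cat]
  refine .cat (PRE.markDeterministic_of_rep_le_one fun a => ?_)
    (PRE.markDeterministic_of_rep_le_one fun a => ?_) ?_
  · exact rep_blockRE_filter_le_one h b a
  · exact rep_coreRE_le_one h a
  · intro u v t a hu huv _
    rcases (mem_lang_blockRE h).mp hu with rfl | ⟨x, hx, rfl⟩ <;>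
      rcases (mem_lang_blockRE h).mp huv with huv | ⟨y, -, huv⟩ <;> simp at huv
    obtain ⟨rfl, -⟩ := huv
    simp [mem_Blist] at hx

theorem markDeterministic_alt_rwi_cat {b : Fin n} (hb : 2 ≤ (b : ℕ)) {X : PRE (Fin n)}
    (hX : X.MarkDeterministic) :
    (PRE.alt (rwi n h b) (.cat (.char b) X)).MarkDeterministic := by
  refine .alt (markDeterministic_rwi h b) (.cat (PRE.markDeterministic_of_rep_le_one ?_) hX ?_) ?_
  · intro a
    unfold PRE.rep
    split_ifs <;> omega
  · rintro u v t a rfl huv -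
    exact List.cons_ne_nil a v (List.cons.inj (huv : b :: a :: v = [b])).2
  · rintro a u v hu ⟨_, rfl, t, -, hv⟩
    obtain ⟨rfl, -⟩ := List.cons.inj hv
    exact cons_notMem_lang_rwi h hb u hu

theorem markDeterministic_rexclTail {u : List (Fin n)} (hu : ∀ x ∈ u, 2 ≤ (x : ℕ)) :
    (rexclTail n h u).MarkDeterministic := by
  induction u with
  | nil => exact PRE.markDeterministic_of_rep_le_one (rep_coreRE_le_one h)
  | cons b rest ih =>
    refine .alt (PRE.markDeterministic_of_rep_le_one fun _ => Nat.zero_le 1)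
      (markDeterministic_alt_rwi_cat h (hu b List.mem_cons_self)
        (ih fun x hx => hu x (List.mem_cons_of_mem b hx))) ?_
    rintro a u v hu -
    exact List.cons_ne_nil a u hu

theorem markDeterministic_rexcl {u : List (Fin n)} (hu : ∀ x ∈ u, 2 ≤ (x : ℕ)) :
    (rexcl n h u).MarkDeterministic := by
  cases u with
  | nil => exact PRE.markDeterministic_of_rep_le_one fun _ => Nat.zero_le 1
  | cons b rest =>
    exact markDeterministic_alt_rwi_cat h (hu b List.mem_cons_self)
      (markDeterministic_rexclTail h fun x hx => hu x (List.mem_cons_of_mem b hx))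

theorem rep_rexclTail_le {u : List (Fin n)} (hu : ∀ x ∈ u, 2 ≤ (x : ℕ)) (a : Fin n) :
    (rexclTail n h u).rep a ≤ 2 * u.length + 1 := by
  induction u with
  | nil => exact (rep_coreRE_le_one h a).trans (by omega)
  | cons b rest ih =>
    have h1 := rep_rwi_add_le h (hu b List.mem_cons_self) a
    have h2 := ih fun x hx => hu x (List.mem_cons_of_mem b hx)
    simp only [rexclTail, PRE.rep, List.length_cons] at h1 h2 ⊢
    omega

theorem rep_rexcl_le {u : List (Fin n)} (hu : ∀ x ∈ u, 2 ≤ (x : ℕ)) (a : Fin n) :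
    (rexcl n h u).rep a ≤ 2 * u.length + 1 := by
  cases u with
  | nil => exact Nat.zero_le _
  | cons b rest => simpa only [rexcl, rexclTail, PRE.rep, zero_add] using rep_rexclTail_le h hu a

end Exclusion

/-- If M learns the class of deterministic (2n+3)-OREs over A = {a₁,…,aₙ} (n ≥ 3),
then every characteristic sample S for r₁ = (a₁a₂ + a₃ + ⋯ + aₙ)⁺ contains all
non-empty words of length at most n over B = A ∖ {a₁,a₂}; hence
|S| ≥ Σ_{i=1}^{n} (n−2)^i. -/
theorem stmt9 (n : ℕ) (hn : 3 ≤ n)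
    (M : Finset (List (Fin n)) → PRE (Fin n))
    (hM : Learns M {r : PRE (Fin n) | r.Deterministic ∧ PRE.IsKORE (2 * n + 3) r})
    (S : Finset (List (Fin n)))
    (hsub : ∀ w ∈ S, w ∈ (r1 n (by omega)).lang)
    (hchar : ∀ S' : Finset (List (Fin n)), S ⊆ S' →
      (∀ w ∈ S', w ∈ (r1 n (by omega)).lang) →
      (M S').lang = (r1 n (by omega)).lang) :
    (∀ w : List (Fin n), w ≠ [] → w.length ≤ n → (∀ b ∈ w, 2 ≤ (b : ℕ)) → w ∈ S) ∧
    ∑ i ∈ Finset.Icc 1 n, (n - 2) ^ i ≤ S.card := by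
  have h2 : 2 ≤ n := by omega
  have hmem : ∀ w : List (Fin n), w ≠ [] → w.length ≤ n → (∀ b ∈ w, 2 ≤ (b : ℕ)) → w ∈ S := by
    intro w hw hlen hB
    have hkore : (rexcl n h2 w).IsKORE (2 * n + 3) := fun a => by
      have := rep_rexcl_le h2 hB a
      omega
    exact hM.mem_of_lang_eq_sub_singleton hsub hchar
      ⟨(markDeterministic_rexcl h2 hB).deterministic, hkore⟩ (mem_lang_r1 h2 hw hB)
      (lang_rexcl h2 hB hw)
  let shiftTwo : Fin (n - 2) ↪ Fin n := ⟨fun x => ⟨x + 2, by omega⟩, fun x y hxy => by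
    simpa [Fin.ext_iff] using hxy⟩
  refine ⟨hmem, ?_⟩
  simpa using sum_pow_card_le_card_of_map_mem shiftTwo fun w hw hlen =>
    hmem _ (by simpa using hw) (by simpa using hlen) (by
      simp only [List.mem_map]
      rintro _ ⟨x, -, rfl⟩
      exact Nat.le_add_left 2 x)
end

section
/- If G is a k-OA that is a Glushkov translation of a deterministic k-ORE r, then the k-ORE strip(s) is deterministic, where s is any SORE over the marked alphabet equivalent to a marking H of G (in particular the output of a sound-and-complete SOA-to-SORE translation applied to H). -/
open Computability

/-- An automaton with unlabeled edges and labeled states: a node-labeled graph with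
distinguished source and sink; the source has no incoming edges and the sink no
outgoing edges. -/
structure OA (σ α : Type) where
  src : σ
  snk : σ
  E : σ → σ → Prop
  lab : σ → α
  src_ne_snk : src ≠ snk
  not_into_src : ∀ s, ¬ E s src
  not_out_snk : ∀ s, ¬ E snk s

/-- A state is internal if it is neither the source nor the sink. -/
def OA.Internal {σ α : Type} (G : OA σ α) (s : σ) : Prop := s ≠ G.src ∧ s ≠ G.snk

/-- A word a₁…aₙ is accepted if there is a walk src, s₁, …, sₙ, snk with
lab(sᵢ) = aᵢ. -/
def OA.Accepts {σ α : Type} (G : OA σ α) (w : List α) : Prop :=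
  ∃ run : List σ, run.map G.lab = w ∧ List.Chain' G.E (G.src :: (run ++ [G.snk]))

/-- `G` is a k-occurrence automaton: at most k states share the same label. -/
def OA.IsKOA {σ α : Type} [Fintype σ] [DecidableEq σ] [DecidableEq α]
    (G : OA σ α) (k : ℕ) : Prop :=
  ∀ a : α,
    (Finset.univ.filter fun s => s ≠ G.src ∧ s ≠ G.snk ∧ G.lab s = a).card ≤ k

/-- `H` is a marking of `G`: same states and edges, and the states are relabeled
injectively with marked symbols whose first component is the original label. -/
def OA.IsMarking {σ α : Type} (G : OA σ α) (H : OA σ (α × ℕ)) : Prop :=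
  H.src = G.src ∧ H.snk = G.snk ∧ H.E = G.E ∧
  (∀ s : σ, s ≠ G.src → s ≠ G.snk → (H.lab s).1 = G.lab s) ∧
  Set.InjOn H.lab {s : σ | s ≠ G.src ∧ s ≠ G.snk}

/-- Whether ε ∈ L(r). -/
def PRE.nullable {α : Type} : PRE α → Bool
  | .empty => false
  | .eps => true
  | .char _ => false
  | .paren r => r.nullable
  | .cat r s => r.nullable && s.nullable
  | .alt r s => r.nullable || s.nullable
  | .opt _ => true
  | .pos r => r.nullable

/-- pos(r): the set of symbols occurring in r. -/
def PRE.posFin {α : Type} [DecidableEq α] : PRE α → Finset α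
  | .empty => ∅
  | .eps => ∅
  | .char a => {a}
  | .paren r => r.posFin
  | .cat r s => r.posFin ∪ s.posFin
  | .alt r s => r.posFin ∪ s.posFin
  | .opt r => r.posFin
  | .pos r => r.posFin

/-- first(r): symbols that can start a word of L(r). -/
def PRE.firstFin {α : Type} [DecidableEq α] : PRE α → Finset α
  | .empty => ∅
  | .eps => ∅
  | .char a => {a}
  | .paren r => r.firstFin
  | .cat r s => if r.nullable then r.firstFin ∪ s.firstFin else r.firstFin
  | .alt r s => r.firstFin ∪ s.firstFin
  | .opt r => r.firstFin
  | .pos r => r.firstFin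

/-- last(r): symbols that can end a word of L(r). -/
def PRE.lastFin {α : Type} [DecidableEq α] : PRE α → Finset α
  | .empty => ∅
  | .eps => ∅
  | .char a => {a}
  | .paren r => r.lastFin
  | .cat r s => if s.nullable then r.lastFin ∪ s.lastFin else s.lastFin
  | .alt r s => r.lastFin ∪ s.lastFin
  | .opt r => r.lastFin
  | .pos r => r.lastFin

/-- follow(r, x): symbols that can follow the symbol x in a word of L(r). -/
def PRE.followFin {α : Type} [DecidableEq α] : PRE α → α → Finset α
  | .empty, _ => ∅
  | .eps, _ => ∅
  | .char _, _ => ∅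
  | .paren r, x => r.followFin x
  | .cat r s, x =>
      if x ∈ r.posFin then
        (if x ∈ r.lastFin then r.followFin x ∪ s.firstFin else r.followFin x)
      else s.followFin x
  | .alt r s, x => if x ∈ r.posFin then r.followFin x else s.followFin x
  | .opt r, x => r.followFin x
  | .pos r, x =>
      if x ∈ r.lastFin then r.followFin x ∪ r.firstFin else r.followFin x

/-- `G` is a Glushkov translation of the k-ORE `r` (with marked version `rbar`),
witnessed by the bijection `ρ` from the internal states of `G` to pos(rbar):
(1) v ∈ Succ(src) ⟺ ρ(v) ∈ first(rbar); (2) v ∈ Pred(snk) ⟺ ρ(v) ∈ last(rbar);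
(3) v ∈ Succ(w) ⟺ ρ(v) ∈ follow(rbar, ρ(w)); (4) strip(ρ(v)) = lab(v);
moreover the src→snk edge exists iff ε ∈ L(rbar). -/
structure OA.IsGlushkov {σ α : Type} [DecidableEq α] (G : OA σ α)
    (rbar : PRE (α × ℕ)) (ρ : σ → α × ℕ) : Prop where
  mem : ∀ s : σ, G.Internal s → ρ s ∈ rbar.posFin
  inj : Set.InjOn ρ {s : σ | G.Internal s}
  surj : ∀ x ∈ rbar.posFin, ∃ s : σ, G.Internal s ∧ ρ s = x
  first : ∀ s : σ, G.Internal s → (G.E G.src s ↔ ρ s ∈ rbar.firstFin)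
  last : ∀ s : σ, G.Internal s → (G.E s G.snk ↔ ρ s ∈ rbar.lastFin)
  follow : ∀ s t : σ, G.Internal s → G.Internal t →
    (G.E s t ↔ ρ t ∈ rbar.followFin (ρ s))
  strip : ∀ s : σ, G.Internal s → (ρ s).1 = G.lab s
  eps : G.E G.src G.snk ↔ rbar.nullable = true

/-- Renaming of the letters of an expression (used for strip: map Prod.fst). -/
def PRE.map {α β : Type} (f : α → β) : PRE α → PRE β
  | .empty => .empty
  | .eps => .eps
  | .char a => .char (f a)
  | .paren r => .paren (r.map f)
  | .cat r s => .cat (r.map f) (s.map f)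
  | .alt r s => .alt (r.map f) (s.map f)
  | .opt r => .opt (r.map f)
  | .pos r => .pos (r.map f)

/-!
The Glushkov automaton `G` of a deterministic expression `r` is itself deterministic: `ρ` sends the
runs of `G` into `L(r̄)` injectively and preserving labels, so two runs that share a prefix and
continue with equally labelled states continue with the same state. The marking `H` relabels the
states of `G` injectively, so `L(s) = L(H)` is deterministic with respect to base letters. Since
`s` is a SORE, the marked version of `strip(s)` is a relabelling of `s` that is injective on
positions and preserves base letters, and a determinism violation of `strip(s)` pulls back along
it to one of `L(s)`.
-/

theorem Set.InjOn.list_map {γ δ : Type*} {f : γ → δ} {S : Set γ} (hf : Set.InjOn f S) :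
    ∀ {l₁ l₂ : List γ}, (∀ x ∈ l₁, x ∈ S) → (∀ x ∈ l₂, x ∈ S) → l₁.map f = l₂.map f → l₁ = l₂
  | [], _, _, _, h => (List.map_eq_nil_iff.1 h.symm).symm
  | _ :: _, [], _, _, h => by simp at h
  | a :: t₁, b :: t₂, h₁, h₂, h => by
    simp only [List.mem_cons, forall_eq_or_imp] at h₁ h₂
    simp only [List.map_cons, List.cons.injEq] at h
    rw [hf h₁.1 h₂.1 h.1, hf.list_map h₁.2 h₂.2 h.2]

namespace Language

variable {γ δ α : Type*}

def IsDeterministic (π : γ → α) (L : Language γ) : Prop :=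
  ∀ (w v v' : List γ) (x y : γ), w ++ x :: v ∈ L → w ++ y :: v' ∈ L → π x = π y → x = y

variable {π : γ → α} {π' : δ → α} {f : γ → δ} {S : Set γ}

theorem IsDeterministic.of_map_mem {L : Language γ} {L' : Language δ}
    (hL' : L'.IsDeterministic π') (hS : ∀ w ∈ L, ∀ x ∈ w, x ∈ S) (hf : Set.InjOn f S)
    (hπ : ∀ x ∈ S, π' (f x) = π x) (hmap : ∀ w ∈ L, w.map f ∈ L') :
    L.IsDeterministic π := by
  intro w v v' x y hx hy hxy
  have hxS : x ∈ S := hS _ hx x (by simp)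
  have hyS : y ∈ S := hS _ hy y (by simp)
  refine hf hxS hyS (hL' (w.map f) (v.map f) (v'.map f) (f x) (f y) ?_ ?_ ?_)
  · simpa using hmap _ hx
  · simpa using hmap _ hy
  · rw [hπ x hxS, hπ y hyS, hxy]

theorem IsDeterministic.map {L : Language γ} (hL : L.IsDeterministic π)
    (hS : ∀ w ∈ L, ∀ x ∈ w, x ∈ S) (hf : Set.InjOn f S) (hπ : ∀ x ∈ S, π' (f x) = π x) :
    (map f L).IsDeterministic π' := by
  rintro w v v' _ _ ⟨u₁, hu₁, heq₁⟩ ⟨u₂, hu₂, heq₂⟩ hxy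
  obtain ⟨w₁, _, rfl, rfl, hrest₁⟩ := List.map_eq_append_iff.1 heq₁
  obtain ⟨x, v₁, rfl, rfl, rfl⟩ := List.map_eq_cons_iff.1 hrest₁
  obtain ⟨w₂, _, rfl, hw, hrest₂⟩ := List.map_eq_append_iff.1 heq₂
  obtain ⟨y, v₂, rfl, rfl, rfl⟩ := List.map_eq_cons_iff.1 hrest₂
  obtain rfl : w₂ = w₁ :=
    hf.list_map (fun z hz => hS _ hu₂ z (by simp [hz])) (fun z hz => hS _ hu₁ z (by simp [hz])) hw
  have hxS : x ∈ S := hS _ hu₁ x (by simp)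
  have hyS : y ∈ S := hS _ hu₂ y (by simp)
  rw [hL w₂ v₁ v₂ x y hu₁ hu₂ (by rw [← hπ x hxS, ← hπ y hyS, hxy])]

end Language

namespace PRE

variable {β γ δ : Type}

theorem mem_lang_char {a : β} {w : List β} : w ∈ (char a).lang ↔ w = [a] := Iff.rfl

theorem nullable_iff (e : PRE β) : e.nullable = true ↔ [] ∈ e.lang := by
  induction e with
  | empty | eps => simp [nullable, lang]
  | char a => simp [nullable, mem_lang_char]
  | paren r ih => exact ih
  | cat r s ihr ihs => simp [nullable, lang, Language.mem_mul, ihr, ihs]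
  | alt r s ihr ihs => simp only [nullable, lang, Language.mem_add, Bool.or_eq_true, ihr, ihs]
  | opt r ih => simp only [nullable, lang, Language.mem_add, Language.mem_one, or_true]
  | pos r ih => simp [nullable, lang, Language.mem_mul, ih, Language.nil_mem_kstar]

theorem lang_map (f : β → γ) (e : PRE β) : (e.map f).lang = Language.map f e.lang := by
  induction e with
  | char a => exact (Set.image_singleton (f := List.map f) (a := [a])).symm
  | _ => simp_all only [PRE.map, lang, map_zero, map_one, map_add, map_mul, Language.map_kstar]

theorem map_map (f : β → γ) (g : γ → δ) (e : PRE β) : (e.map f).map g = e.map (g ∘ f) := by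
  induction e <;> simp_all [PRE.map]

theorem map_eq_map_iff [DecidableEq β] {f g : β → γ} {e : PRE β} :
    e.map f = e.map g ↔ ∀ x ∈ e.posFin, f x = g x := by
  induction e <;> simp_all [PRE.map, posFin, or_imp, forall_and]

theorem exists_map_eq_of_disjoint [DecidableEq γ] {P Q : PRE γ}
    (hd : Disjoint P.posFin Q.posFin) (g₁ g₂ : γ → β) :
    ∃ g, P.map g = P.map g₁ ∧ Q.map g = Q.map g₂ :=
  ⟨fun x => if x ∈ P.posFin then g₁ x else g₂ x, map_eq_map_iff.2 fun _ hx => if_pos hx,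
    map_eq_map_iff.2 fun _ hx => if_neg (Finset.disjoint_right.1 hd hx)⟩

section DecidableEq

variable [DecidableEq β]

theorem posFin_map [DecidableEq γ] (f : β → γ) (e : PRE β) :
    (e.map f).posFin = e.posFin.image f := by
  induction e <;> simp_all [PRE.map, posFin, Finset.image_union]

theorem firstFin_subset_posFin (e : PRE β) : e.firstFin ⊆ e.posFin := by
  induction e <;> simp only [firstFin, posFin] <;> grind

theorem lastFin_subset_posFin (e : PRE β) : e.lastFin ⊆ e.posFin := by
  induction e <;> simp only [lastFin, posFin] <;> grind

theorem followFin_subset_posFin (e : PRE β) (x : β) : e.followFin x ⊆ e.posFin := by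
  induction e <;> simp only [followFin, posFin] <;> grind [firstFin_subset_posFin]

theorem mem_posFin_of_mem_lang {e : PRE β} {w : List β} (hw : w ∈ e.lang) {x : β} (hx : x ∈ w) :
    x ∈ e.posFin := by
  induction e generalizing w with
  | empty => exact absurd hw (Language.notMem_zero w)
  | eps => simp_all [lang, Language.mem_one]
  | char a => simp_all [mem_lang_char, posFin]
  | paren r ih => exact ih hw hx
  | cat r s ihr ihs =>
    obtain ⟨u, hu, v, hv, rfl⟩ := hw
    rcases List.mem_append.1 hx with h | h
    · exact Finset.mem_union_left _ (ihr hu h)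
    · exact Finset.mem_union_right _ (ihs hv h)
  | alt r s ihr ihs =>
    rcases hw with h | h
    · exact Finset.mem_union_left _ (ihr h hx)
    · exact Finset.mem_union_right _ (ihs h hx)
  | opt r ih =>
    rcases hw with h | rfl
    · exact ih h hx
    · simp at hx
  | pos r ih =>
    obtain ⟨u, hu, v, ⟨S, rfl, hS⟩, rfl⟩ := hw
    rcases List.mem_append.1 hx with h | h
    · exact ih hu h
    · obtain ⟨l, hl, hxl⟩ := List.mem_flatten.1 h
      exact ih (hS l hl) hxl

theorem rep_pos_iff (e : PRE β) (x : β) : 0 < e.rep x ↔ x ∈ e.posFin := by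
  induction e <;> simp_all [rep, posFin, eq_comm, apply_ite]

def IsSORE (e : PRE β) : Prop := ∀ x, e.rep x ≤ 1

theorem forall_rep_add_rep_le_one_iff {r s : PRE β} :
    (∀ x, r.rep x + s.rep x ≤ 1) ↔ r.IsSORE ∧ s.IsSORE ∧ Disjoint r.posFin s.posFin := by
  simp only [IsSORE, Finset.disjoint_left, ← rep_pos_iff]
  refine ⟨fun h => ⟨fun x => ?_, fun x => ?_, fun x _ => ?_⟩, fun ⟨hr, hs, hd⟩ x => ?_⟩
  all_goals grind

theorem isSORE_cat_iff {r s : PRE β} :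
    (cat r s).IsSORE ↔ r.IsSORE ∧ s.IsSORE ∧ Disjoint r.posFin s.posFin :=
  forall_rep_add_rep_le_one_iff

theorem isSORE_alt_iff {r s : PRE β} :
    (alt r s).IsSORE ↔ r.IsSORE ∧ s.IsSORE ∧ Disjoint r.posFin s.posFin :=
  forall_rep_add_rep_le_one_iff

theorem injOn_of_isSORE_map [DecidableEq γ] {f : β → γ} {e : PRE β} (h : (e.map f).IsSORE) :
    Set.InjOn f e.posFin := by
  induction e with
  | empty | eps | char a => simp [posFin]
  | paren r ih | opt r ih | pos r ih => exact ih h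
  | cat r s ihr ihs | alt r s ihr ihs =>
    obtain ⟨hr, hs, hd⟩ := forall_rep_add_rep_le_one_iff.1 h
    rw [posFin_map, posFin_map, Finset.disjoint_left] at hd
    intro x hx y hy hxy
    simp only [posFin, Finset.coe_union, Set.mem_union, Finset.mem_coe] at hx hy
    rcases hx with hx | hx <;> rcases hy with hy | hy
    · exact ihr hr hx hy hxy
    · exact (hd (Finset.mem_image_of_mem f hx) (hxy ▸ Finset.mem_image_of_mem f hy)).elim
    · exact (hd (Finset.mem_image_of_mem f hy) (hxy ▸ Finset.mem_image_of_mem f hx)).elim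
    · exact ihs hs hx hy hxy

variable {r s : PRE β} {x y : β}

def Follows (e : PRE β) (x y : β) : Prop := y ∈ e.followFin x

/-- Every nonempty word accepted by the Glushkov automaton of `e` lies in `L(e)`. -/
def GlushkovSound (e : PRE β) : Prop :=
  ∀ ⦃x : β⦄ ⦃t : List β⦄, x ∈ e.firstFin → (x :: t).getLast (List.cons_ne_nil x t) ∈ e.lastFin →
    (x :: t).IsChain e.Follows → x :: t ∈ e.lang

theorem mem_firstFin_cat :
    x ∈ (cat r s).firstFin ↔ x ∈ r.firstFin ∨ r.nullable ∧ x ∈ s.firstFin := by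
  simp only [firstFin]; split_ifs <;> simp [*]

theorem mem_lastFin_cat :
    x ∈ (cat r s).lastFin ↔ x ∈ s.lastFin ∨ s.nullable ∧ x ∈ r.lastFin := by
  simp only [lastFin]; split_ifs <;> simp [*, or_comm]

theorem follows_cat_of_mem (hx : x ∈ r.posFin) :
    (cat r s).Follows x y ↔ r.Follows x y ∨ x ∈ r.lastFin ∧ y ∈ s.firstFin := by
  simp only [Follows, followFin, hx, if_true]; split_ifs <;> simp [*]

theorem follows_cat_of_not_mem (hx : x ∉ r.posFin) : (cat r s).Follows x y ↔ s.Follows x y := by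
  simp [Follows, followFin, hx]

theorem follows_alt_of_mem (hx : x ∈ r.posFin) : (alt r s).Follows x y ↔ r.Follows x y := by
  simp [Follows, followFin, hx]

theorem follows_alt_of_not_mem (hx : x ∉ r.posFin) : (alt r s).Follows x y ↔ s.Follows x y := by
  simp [Follows, followFin, hx]

theorem follows_pos : (pos r).Follows x y ↔ r.Follows x y ∨ x ∈ r.lastFin ∧ y ∈ r.firstFin := by
  simp only [Follows, followFin]; split_ifs <;> simp [*]

theorem glushkovSound_char (a : β) : (char a).GlushkovSound := by
  rintro x (_ | ⟨y, t⟩) hx - hch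
  · simpa [firstFin, mem_lang_char] using hx
  · simpa [Follows, followFin] using hch.rel_head? (y := y) rfl

theorem GlushkovSound.mem_lang_of_follows_imp {e e' : PRE β} (he' : e'.GlushkovSound)
    (hfollows : ∀ z ∈ e'.posFin, ∀ y, e.Follows z y → e'.Follows z y)
    (hlast : ∀ z ∈ e'.posFin, z ∈ e.lastFin → z ∈ e'.lastFin) {t : List β}
    (hx : x ∈ e'.firstFin) (hxt : (x :: t).getLast (List.cons_ne_nil x t) ∈ e.lastFin)
    (hch : (x :: t).IsChain e.Follows) : x :: t ∈ e'.lang := by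
  have hpos : ∀ z ∈ x :: t, z ∈ e'.posFin :=
    hch.induction _ _ (fun z y hzy hz => followFin_subset_posFin _ _ (hfollows z hz y hzy))
      (fun _ => firstFin_subset_posFin _ hx)
  exact he' hx (hlast _ (hpos _ (List.getLast_mem _)) hxt)
    (hch.imp_of_mem_imp fun z y hz _ => hfollows z (hpos z hz) y)

theorem GlushkovSound.alt (hr : r.GlushkovSound) (hs : s.GlushkovSound)
    (hd : Disjoint r.posFin s.posFin) : (alt r s).GlushkovSound := by
  intro x t hx hlast hch
  rcases Finset.mem_union.1 hx with hx | hx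
  · refine Or.inl (hr.mem_lang_of_follows_imp (fun z hz y => (follows_alt_of_mem hz).1)
      (fun z hz hzl => ?_) hx hlast hch)
    exact (Finset.mem_union.1 hzl).resolve_right
      fun h => Finset.disjoint_left.1 hd hz (lastFin_subset_posFin _ h)
  · refine Or.inr (hs.mem_lang_of_follows_imp
      (fun z hz y => (follows_alt_of_not_mem (Finset.disjoint_right.1 hd hz)).1)
      (fun z hz hzl => ?_) hx hlast hch)
    exact (Finset.mem_union.1 hzl).resolve_left
      fun h => Finset.disjoint_right.1 hd hz (lastFin_subset_posFin _ h)

theorem GlushkovSound.cat (hr : r.GlushkovSound) (hs : s.GlushkovSound)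
    (hd : Disjoint r.posFin s.posFin) : (cat r s).GlushkovSound := by
  have hsuffix : ∀ ⦃x t⦄, x ∈ s.firstFin →
      (x :: t).getLast (List.cons_ne_nil x t) ∈ (PRE.cat r s).lastFin →
      (x :: t).IsChain (PRE.cat r s).Follows → x :: t ∈ s.lang :=
    fun _ _ => hs.mem_lang_of_follows_imp
      (fun z hz y => (follows_cat_of_not_mem (Finset.disjoint_right.1 hd hz)).1)
      (fun z hz hzl => (mem_lastFin_cat.1 hzl).resolve_right
        fun h => Finset.disjoint_right.1 hd hz (lastFin_subset_posFin _ h.2))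
  have split : ∀ t x, x ∈ r.posFin →
      (x :: t).getLast (List.cons_ne_nil x t) ∈ (PRE.cat r s).lastFin →
      (x :: t).IsChain (PRE.cat r s).Follows → ∃ u w, t = u ++ w ∧ (x :: u).IsChain r.Follows ∧
        (x :: u).getLast (List.cons_ne_nil x u) ∈ r.lastFin ∧ w ∈ s.lang := by
    intro t
    induction t with
    | nil =>
      intro x hx hlast _
      rcases mem_lastFin_cat.1 hlast with h | ⟨hnull, h⟩
      · exact absurd (lastFin_subset_posFin _ h) (Finset.disjoint_left.1 hd hx)
      · exact ⟨[], [], rfl, .singleton x, h, (nullable_iff s).1 hnull⟩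
    | cons y t ih =>
      intro x hx hlast hch
      rw [List.isChain_cons_cons] at hch
      rcases (follows_cat_of_mem hx).1 hch.1 with hxy | ⟨hxl, hy⟩
      · obtain ⟨u, w, rfl, hu, hul, hw⟩ :=
          ih y (followFin_subset_posFin _ _ hxy) (by simpa using hlast) hch.2
        exact ⟨y :: u, w, rfl, hu.cons_cons hxy, by simpa using hul, hw⟩
      · exact ⟨[], y :: t, rfl, .singleton x, hxl, hsuffix hy (by simpa using hlast) hch.2⟩
  intro x t hx hlast hch
  rcases mem_firstFin_cat.1 hx with hx | ⟨hnull, hx⟩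
  · obtain ⟨u, w, rfl, hu, hul, hw⟩ := split t x (firstFin_subset_posFin _ hx) hlast hch
    exact ⟨x :: u, hr hx hul hu, w, hw, rfl⟩
  · exact ⟨[], (nullable_iff r).1 hnull, x :: t, hsuffix hx hlast hch, rfl⟩

theorem GlushkovSound.pos (hr : r.GlushkovSound) : (PRE.pos r).GlushkovSound := by
  have split : ∀ t x, (x :: t).getLast (List.cons_ne_nil x t) ∈ r.lastFin →
      (x :: t).IsChain (PRE.pos r).Follows → ∃ u w, t = u ++ w ∧ (x :: u).IsChain r.Follows ∧
        (x :: u).getLast (List.cons_ne_nil x u) ∈ r.lastFin ∧ w ∈ r.lang∗ := by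
    intro t
    induction t with
    | nil => exact fun x hlast _ => ⟨[], [], rfl, .singleton x, hlast, Language.nil_mem_kstar _⟩
    | cons y t ih =>
      intro x hlast hch
      rw [List.isChain_cons_cons] at hch
      obtain ⟨u, w, rfl, hu, hul, hw⟩ := ih y (by simpa using hlast) hch.2
      rcases follows_pos.1 hch.1 with hxy | ⟨hxl, hy⟩
      · exact ⟨y :: u, w, rfl, hu.cons_cons hxy, by simpa using hul, hw⟩
      · exact ⟨[], (y :: u) ++ w, rfl, .singleton x, hxl,
          (mul_kstar_le_kstar : r.lang * r.lang∗ ≤ r.lang∗) ⟨y :: u, hr hy hul hu, w, hw, rfl⟩⟩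
  intro x t hx hlast hch
  obtain ⟨u, w, rfl, hu, hul, hw⟩ := split t x hlast hch
  exact ⟨x :: u, hr hx hul hu, w, hw, rfl⟩

theorem IsSORE.glushkovSound {e : PRE β} (he : e.IsSORE) : e.GlushkovSound := by
  induction e with
  | empty | eps => intro x t hx; simp [firstFin] at hx
  | char a => exact glushkovSound_char a
  | paren r ih => exact ih he
  | opt r ih => exact fun x t hx hlast hch => Or.inl (ih he hx hlast hch)
  | pos r ih => exact (ih he).pos
  | cat r s ihr ihs =>
    obtain ⟨hr, hs, hd⟩ := isSORE_cat_iff.1 he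
    exact (ihr hr).cat (ihs hs) hd
  | alt r s ihr ihs =>
    obtain ⟨hr, hs, hd⟩ := isSORE_alt_iff.1 he
    exact (ihr hr).alt (ihs hs) hd

end DecidableEq

section Marking

variable {α : Type} [DecidableEq α]

theorem le_markAux_snd (e : PRE α) (c : α → ℕ) (a : α) : c a ≤ (e.markAux c).2 a := by
  induction e generalizing c with
  | char b => by_cases h : a = b <;> simp [markAux, h]
  | cat r s ihr ihs | alt r s ihr ihs => exact (ihr c).trans (ihs _)
  | _ => simp_all [markAux]

theorem mem_posFin_markAux {e : PRE α} {c : α → ℕ} {x : α × ℕ}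
    (hx : x ∈ (e.markAux c).1.posFin) : c x.1 < x.2 ∧ x.2 ≤ (e.markAux c).2 x.1 := by
  induction e generalizing c with
  | char b => simp_all [markAux, posFin]
  | cat r s ihr ihs | alt r s ihr ihs =>
    simp only [markAux, posFin, Finset.mem_union] at hx ⊢
    rcases hx with h | h
    · exact ⟨(ihr h).1, (ihr h).2.trans (le_markAux_snd _ _ _)⟩
    · exact ⟨(le_markAux_snd _ _ _).trans_lt (ihs h).1, (ihs h).2⟩
  | _ => simp_all [markAux, posFin]

theorem disjoint_posFin_markAux (e e' : PRE α) (c : α → ℕ) :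
    Disjoint (e.markAux c).1.posFin (e'.markAux (e.markAux c).2).1.posFin :=
  Finset.disjoint_left.2 fun _ h h' => by
    have := (mem_posFin_markAux h).2
    have := (mem_posFin_markAux h').1
    omega

theorem isSORE_markAux (e : PRE α) (c : α → ℕ) : (e.markAux c).1.IsSORE := by
  induction e generalizing c with
  | char b => intro x; simp only [markAux, rep]; split <;> omega
  | cat r s ihr ihs | alt r s ihr ihs =>
    exact forall_rep_add_rep_le_one_iff.2 ⟨ihr c, ihs _, disjoint_posFin_markAux r s c⟩
  | paren r ih | opt r ih | pos r ih => exact ih c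
  | _ => intro x; simp [markAux, rep]

theorem map_fst_markAux (e : PRE α) (c : α → ℕ) : (e.markAux c).1.map Prod.fst = e := by
  induction e generalizing c <;> simp_all [markAux, PRE.map]

theorem exists_map_markAux_map_eq [Nonempty β] (f : β → α) (e : PRE β) (c : α → ℕ) :
    ∃ g, ((e.map f).markAux c).1.map g = e := by
  induction e generalizing c with
  | empty | eps => exact ⟨fun _ => Classical.arbitrary β, rfl⟩
  | char b => exact ⟨fun _ => b, rfl⟩
  | paren r ih | opt r ih | pos r ih =>
    obtain ⟨g, hg⟩ := ih c
    exact ⟨g, by simp [PRE.map, markAux, hg]⟩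
  | cat r s ihr ihs | alt r s ihr ihs =>
    obtain ⟨g₁, hg₁⟩ := ihr c
    obtain ⟨g₂, hg₂⟩ := ihs ((r.map f).markAux c).2
    obtain ⟨g, hr, hs⟩ :=
      exists_map_eq_of_disjoint (disjoint_posFin_markAux (r.map f) (s.map f) c) g₁ g₂
    exact ⟨g, by simp [PRE.map, markAux, hr, hs, hg₁, hg₂]⟩

theorem Deterministic.isDeterministic_lang {r : PRE α} (h : r.Deterministic) :
    r.mark.lang.IsDeterministic Prod.fst := by
  rintro w v v' ⟨a, i⟩ ⟨b, j⟩ hi hj (rfl : a = b)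
  rw [h w v v' a i j hi hj]

theorem IsSORE.deterministic_map [DecidableEq β] {f : β → α} {s : PRE β} (hs : s.IsSORE)
    (hdet : s.lang.IsDeterministic f) : (s.map f).Deterministic := by
  intro w v v' a i j hi hj
  have hiM : (a, i) ∈ (s.map f).mark.posFin := mem_posFin_of_mem_lang hi (by simp)
  -- the relabelling below needs a default letter for the `∅` and `ε` subterms
  have : Nonempty β := by
    have ha : a ∈ (s.map f).posFin := by
      rw [← map_fst_markAux (s.map f) (fun _ => 0), posFin_map]
      exact Finset.mem_image_of_mem _ hiM
    rw [posFin_map] at ha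
    obtain ⟨b, -, -⟩ := Finset.mem_image.1 ha
    exact ⟨b⟩
  obtain ⟨g, hg⟩ : ∃ g, (s.map f).mark.map g = s := exists_map_markAux_map_eq f s _
  have hlabel : ∀ x ∈ (s.map f).mark.posFin, f (g x) = x.1 :=
    map_eq_map_iff.1 ((map_map g f _).symm.trans
      ((congrArg (map f) hg).trans (map_fst_markAux _ _).symm))
  have hsore : ((s.map f).mark.map g).IsSORE := by rw [hg]; exact hs
  have hmark : (s.map f).mark.lang.IsDeterministic Prod.fst :=
    hdet.of_map_mem (fun _ hw _ hx => mem_posFin_of_mem_lang hw hx)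
      (injOn_of_isSORE_map hsore) hlabel
      (fun w hw => by rw [← hg, lang_map]; exact ⟨w, hw, rfl⟩)
  exact congrArg Prod.snd (hmark w v v' _ _ hi hj rfl)

end Marking

end PRE

namespace OA

variable {σ α : Type} {G : OA σ α}

def runLang (G : OA σ α) : Language σ := {run | (G.src :: (run ++ [G.snk])).IsChain G.E}

theorem mem_runLang {run : List σ} :
    run ∈ G.runLang ↔ (G.src :: (run ++ [G.snk])).IsChain G.E :=
  Iff.rfl

theorem internal_of_mem_runLang {run : List σ} (hrun : run ∈ G.runLang) :
    ∀ p ∈ run, G.Internal p := by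
  intro p hp
  obtain ⟨A, B, rfl⟩ := List.append_of_mem hp
  constructor
  · rintro rfl
    have h : ((G.src :: A) ++ (G.src :: (B ++ [G.snk]))).IsChain G.E := by
      simpa using mem_runLang.1 hrun
    exact G.not_into_src _ (h.rel_getLast_head_of_append (by simp) (by simp))
  · rintro rfl
    have h : ((G.src :: A ++ [G.snk]) ++ (B ++ [G.snk])).IsChain G.E := by
      simpa using mem_runLang.1 hrun
    exact G.not_out_snk _ (by simpa using h.rel_getLast_head_of_append (by simp) (by simp))

theorem IsGlushkov.map_mem_lang [DecidableEq α] {rbar : PRE (α × ℕ)} {ρ : σ → α × ℕ}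
    (hG : G.IsGlushkov rbar ρ) (hbar : rbar.GlushkovSound) {run : List σ}
    (hrun : run ∈ G.runLang) : run.map ρ ∈ rbar.lang := by
  have hint := internal_of_mem_runLang hrun
  cases run with
  | nil => exact (rbar.nullable_iff).1 (hG.eps.1 (by simpa using mem_runLang.1 hrun))
  | cons p t =>
    have h : ((G.src :: p :: t) ++ [G.snk]).IsChain G.E := hrun
    have hlast := h.rel_getLast_head_of_append (by simp) (by simp)
    rw [List.getLast_cons (List.cons_ne_nil p t)] at hlast
    have hchain := List.isChain_cons_cons.1 h.left_of_append
    refine hbar ((hG.first p (hint p (by simp))).1 hchain.1) ?_ ?_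
    · convert (hG.last _ (hint _ (List.getLast_mem _))).1 hlast using 1
      exact List.getLast_map (l := p :: t) (f := ρ) (by simp)
    · exact (List.isChain_map ρ).2 (hchain.2.imp_of_mem_imp
        fun a b ha hb hab => (hG.follow a b (hint a ha) (hint b hb)).1 hab)

theorem IsGlushkov.isDeterministic_runLang [DecidableEq α] {rbar : PRE (α × ℕ)}
    {ρ : σ → α × ℕ} (hG : G.IsGlushkov rbar ρ) (hbar : rbar.GlushkovSound)
    (hdet : rbar.lang.IsDeterministic Prod.fst) : G.runLang.IsDeterministic G.lab :=
  hdet.of_map_mem (fun _ hrun => internal_of_mem_runLang hrun) hG.inj hG.strip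
    (fun _ hrun => hG.map_mem_lang hbar hrun)

theorem IsMarking.accepts_iff {H : OA σ (α × ℕ)} (hH : G.IsMarking H) {w : List (α × ℕ)} :
    H.Accepts w ↔ w ∈ Language.map H.lab G.runLang := by
  obtain ⟨hsrc, hsnk, hE, -⟩ := hH
  simp only [Accepts, runLang, ← hsrc, ← hsnk, ← hE]
  exact ⟨fun ⟨run, hw, hrun⟩ => ⟨run, hrun, hw⟩, fun ⟨run, hrun, hw⟩ => ⟨run, hw, hrun⟩⟩

theorem IsMarking.isDeterministic_map_runLang {H : OA σ (α × ℕ)} (hH : G.IsMarking H)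
    (hG : G.runLang.IsDeterministic G.lab) :
    (Language.map H.lab G.runLang).IsDeterministic Prod.fst :=
  hG.map (fun _ hrun => internal_of_mem_runLang hrun) hH.2.2.2.2 fun x hx => hH.2.2.2.1 x hx.1 hx.2

end OA

theorem stmt15_general {σ' α : Type} [DecidableEq α] (r : PRE α)
    (hdet : r.Deterministic)
    (G : OA σ' α) (ρ : σ' → α × ℕ) (hG : G.IsGlushkov r.mark ρ)
    (H : OA σ' (α × ℕ)) (hH : G.IsMarking H)
    (s : PRE (α × ℕ)) (hsore : ∀ x : α × ℕ, s.rep x ≤ 1)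
    (hlang : ∀ w : List (α × ℕ), w ∈ s.lang ↔ H.Accepts w) :
    (s.map Prod.fst).Deterministic := by
  have hruns : G.runLang.IsDeterministic G.lab :=
    hG.isDeterministic_runLang (PRE.isSORE_markAux r _).glushkovSound hdet.isDeterministic_lang
  have hs : s.lang = Language.map H.lab G.runLang :=
    Language.ext fun w => (hlang w).trans hH.accepts_iff
  refine PRE.IsSORE.deterministic_map hsore ?_
  rw [hs]
  exact hH.isDeterministic_map_runLang hruns

/-- If G is a Glushkov translation of a deterministic k-ORE r, H a marking of G,
and s a SORE over the marked alphabet with L(s) = L(H), then strip(s) is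
deterministic. -/
theorem stmt15 {σ' α : Type} [DecidableEq α] (k : ℕ) (r : PRE α)
    (hk : PRE.IsKORE k r) (hdet : r.Deterministic)
    (G : OA σ' α) (ρ : σ' → α × ℕ) (hG : G.IsGlushkov r.mark ρ)
    (H : OA σ' (α × ℕ)) (hH : G.IsMarking H)
    (s : PRE (α × ℕ)) (hsore : ∀ x : α × ℕ, s.rep x ≤ 1)
    (hlang : ∀ w : List (α × ℕ), w ∈ s.lang ↔ H.Accepts w) :
    (s.map Prod.fst).Deterministic :=
  stmt15_general r hdet G ρ hG H hH s hsore hlang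
end
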